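/- arXiv:1601.06676 — 2 statements merged into one kernel-verified Lean document; each statement's English description precedes it below -/
import Mathlib

section
/- Let W, U, Z be finitely-valued random variables with W − U − Z and U − W − Z both Markov chains, and let U₀ be the zero-information random variable of W with respect to P_{Z|W} (i.e., U₀ is the equivalence class of W under the relation w₁ ∼ w₂ iff P_{Z|W}(·|w₁) = P_{Z|W}(·|w₂)). Then U₀ is a deterministic function of U almost surely. -/
open Finset

section PD
variable {Ω α β γ : Type*}

open Classical in
/-- Pushforward distribution of `p` under the random variable `f`. -/
noncomputable def push [Fintype Ω] (p : Ω → ℝ) (f : Ω → α) : α → ℝ :=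
  fun a => ∑ ω, if f ω = a then p ω else 0

/-- Shannon entropy (base 2) of a pmf on a finite alphabet. -/
noncomputable def ent [Fintype α] (q : α → ℝ) : ℝ := -∑ a, q a * Real.logb 2 (q a)

/-- Entropy of a random variable `f` under the distribution `p` on the sample space. -/
noncomputable def H [Fintype Ω] [Fintype α] (p : Ω → ℝ) (f : Ω → α) : ℝ := ent (push p f)

/-- Conditional entropy `H(f | g)`. -/
noncomputable def condH [Fintype Ω] [Fintype α] [Fintype β] (p : Ω → ℝ) (f : Ω → α) (g : Ω → β) : ℝ :=
  H p (fun ω => (f ω, g ω)) - H p g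

/-- Mutual information `I(f ; g)`. -/
noncomputable def mi [Fintype Ω] [Fintype α] [Fintype β] (p : Ω → ℝ) (f : Ω → α) (g : Ω → β) : ℝ :=
  H p f + H p g - H p (fun ω => (f ω, g ω))

/-- Conditional mutual information `I(f ; g | h)`. -/
noncomputable def cmi [Fintype Ω] [Fintype α] [Fintype β] [Fintype γ]
    (p : Ω → ℝ) (f : Ω → α) (g : Ω → β) (h : Ω → γ) : ℝ :=
  condH p f h + condH p g h - condH p (fun ω => (f ω, g ω)) h

/-- `p` is a probability mass function. -/
def IsProb [Fintype Ω] (p : Ω → ℝ) : Prop := (∀ ω, 0 ≤ p ω) ∧ ∑ ω, p ω = 1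

/-- Markov chain `f − g − h`: conditional independence of `f` and `h` given `g`,
expressed as `P(a,b,c)·P(b) = P(a,b)·P(b,c)`. -/
def Markov [Fintype Ω] (p : Ω → ℝ) (f : Ω → α) (g : Ω → β) (h : Ω → γ) : Prop :=
  ∀ a b c, push p (fun ω => (f ω, g ω, h ω)) (a, b, c) * push p g b =
    push p (fun ω => (f ω, g ω)) (a, b) * push p (fun ω => (g ω, h ω)) (b, c)

open Classical in
/-- Kullback–Leibler divergence (base 2), with the sum restricted to the support of `P`. -/
noncomputable def KL [Fintype α] (P Q : α → ℝ) : ℝ :=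
  ∑ a, if 0 < P a then P a * Real.logb 2 (P a / Q a) else 0

end PD

/-- The zero-information equivalence: `w₁ ∼ w₂` iff the conditional laws
`c w₁ = P_{Z|W}(·|w₁)` and `c w₂` coincide. -/
def zeroInfoSetoid {W Z : Type*} (c : W → Z → ℝ) : Setoid W :=
  ⟨fun w₁ w₂ => ∀ z, c w₁ z = c w₂ z,
   ⟨fun _ _ => rfl, fun h z => (h z).symm, fun h₁ h₂ z => (h₁ z).trans (h₂ z)⟩⟩

/-! The Markov chains `W − U − Z` and `U − W − Z` give `P(w,u,z) = P(w,u) P(z|u)` and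
`P(u,w,z) = P(u,w) P(z|w)`, so `P(z|w) = P(z|u)` whenever `P(w,u) > 0`. Hence the class of `W`
under `∼` is determined by `U` on the support of `p`. -/

section ConditionalLaw
variable {Ω α β γ : Type*} [Fintype Ω] {p : Ω → ℝ}

/-- `P_{h|f}(z | a)`. -/
noncomputable def condLaw (p : Ω → ℝ) (f : Ω → α) (h : Ω → γ) (a : α) (z : γ) : ℝ :=
  push p (fun ω => (f ω, h ω)) (a, z) / push p f a

theorem IsProb.exists_pos (hp : IsProb p) : ∃ ω, 0 < p ω := by
  have : ∑ _ω : Ω, (0 : ℝ) < ∑ ω, p ω := by simp [hp.2]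
  obtain ⟨ω, -, hω⟩ := Finset.exists_lt_of_sum_lt this
  exact ⟨ω, hω⟩

theorem push_pos (hp : ∀ ω, 0 ≤ p ω) (f : Ω → α) {ω : Ω} (hω : 0 < p ω) :
    0 < push p f (f ω) :=
  Finset.sum_pos' (fun ω' _ => by split <;> simp [hp ω']) ⟨ω, Finset.mem_univ ω, by simp [hω]⟩

theorem push_comp_of_injective {e : α → β} (he : Function.Injective e) (f : Ω → α) (a : α) :
    push p (fun ω => e (f ω)) (e a) = push p f a := by
  classical
  exact Finset.sum_congr rfl fun _ _ => if_congr he.eq_iff rfl rfl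

theorem Markov.push_eq_mul_condLaw {f : Ω → α} {g : Ω → β} {h : Ω → γ} (hm : Markov p f g h)
    (a : α) {b : β} (hb : push p g b ≠ 0) (z : γ) :
    push p (fun ω => (f ω, g ω, h ω)) (a, b, z) =
      push p (fun ω => (f ω, g ω)) (a, b) * condLaw p g h b z := by
  rw [condLaw, mul_div_assoc', eq_div_iff hb, hm a b z]

theorem condLaw_eq_of_markov {f : Ω → α} {g : Ω → β} {h : Ω → γ} (hp : ∀ ω, 0 ≤ p ω)
    (hfgh : Markov p f g h) (hgfh : Markov p g f h) {ω : Ω} (hω : 0 < p ω) (z : γ) :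
    condLaw p f h (f ω) z = condLaw p g h (g ω) z := by
  have hfg := push_pos hp (fun ω => (f ω, g ω)) hω
  have swap_pair := push_comp_of_injective (p := p) Prod.swap_injective
    (fun ω => (g ω, f ω)) (g ω, f ω)
  have swap_triple := push_comp_of_injective (p := p)
    (e := fun x : β × α × γ => (x.2.1, x.1, x.2.2))
    (fun _ _ hx => by simp only [Prod.ext_iff] at hx ⊢; tauto) (fun ω => (g ω, f ω, h ω))
    (g ω, f ω, z)
  refine mul_left_cancel₀ hfg.ne' ?_
  calc push p (fun ω => (f ω, g ω)) (f ω, g ω) * condLaw p f h (f ω) z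
      = push p (fun ω => (g ω, f ω)) (g ω, f ω) * condLaw p f h (f ω) z := by
        rw [← swap_pair]; rfl
    _ = push p (fun ω => (g ω, f ω, h ω)) (g ω, f ω, z) :=
        (hgfh.push_eq_mul_condLaw _ (push_pos hp f hω).ne' z).symm
    _ = push p (fun ω => (f ω, g ω, h ω)) (f ω, g ω, z) := swap_triple.symm
    _ = push p (fun ω => (f ω, g ω)) (f ω, g ω) * condLaw p g h (g ω) z :=
        hfgh.push_eq_mul_condLaw _ (push_pos hp g hω).ne' z

end ConditionalLaw

theorem Function.exists_comp_eq_on {Ω α β : Type*} [Nonempty β] {f : Ω → α} {k : Ω → β}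
    (S : Set Ω) (hS : ∀ ω ∈ S, ∀ ω' ∈ S, f ω = f ω' → k ω = k ω') :
    ∃ g : α → β, ∀ ω ∈ S, g (f ω) = k ω := by
  refine ⟨Function.extend (fun x : S => f x) (fun x => k x) fun _ => Classical.arbitrary β,
    fun ω hω => ?_⟩
  have hfac : Function.FactorsThrough (fun x : S => k x) (fun x : S => f x) :=
    fun x y hxy => hS x x.2 y y.2 hxy
  exact hfac.extend_apply _ ⟨ω, hω⟩

theorem zero_info_function_of_U_general {Ω W U Z : Type*}
    [Fintype Ω]
    (p : Ω → ℝ) (hp : IsProb p)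
    (fW : Ω → W) (fU : Ω → U) (fZ : Ω → Z)
    (hWUZ : Markov p fW fU fZ) (hUWZ : Markov p fU fW fZ)
    (c : W → Z → ℝ)
    (hc : ∀ w z, c w z = push p (fun ω => (fW ω, fZ ω)) (w, z) / push p fW w) :
    ∃ g : U → Quotient (zeroInfoSetoid c),
      ∀ ω : Ω, 0 < p ω → g (fU ω) = Quotient.mk (zeroInfoSetoid c) (fW ω) := by
  obtain ⟨ω₀, hω₀⟩ := hp.exists_pos
  obtain rfl : c = condLaw p fW fZ := funext fun w => funext (hc w)
  have : Nonempty (Quotient (zeroInfoSetoid (condLaw p fW fZ))) := ⟨Quotient.mk _ (fW ω₀)⟩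
  refine Function.exists_comp_eq_on {ω | 0 < p ω} fun ω hω ω' hω' hU => Quotient.sound fun z => ?_
  rw [condLaw_eq_of_markov hp.1 hWUZ hUWZ hω, hU, condLaw_eq_of_markov hp.1 hWUZ hUWZ hω']

/-- if `W − U − Z` and `U − W − Z` are both Markov chains, then the
zero-information variable `U₀` of `W` w.r.t. `P_{Z|W}` (the equivalence class of `W`)
is almost surely a deterministic function of `U`. -/
theorem zero_info_function_of_U {Ω W U Z : Type*}
    [Fintype Ω] [Fintype W] [Fintype U] [Fintype Z]
    (p : Ω → ℝ) (hp : IsProb p)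
    (fW : Ω → W) (fU : Ω → U) (fZ : Ω → Z)
    (hWUZ : Markov p fW fU fZ) (hUWZ : Markov p fU fW fZ)
    (c : W → Z → ℝ)
    (hc : ∀ w z, c w z = push p (fun ω => (fW ω, fZ ω)) (w, z) / push p fW w) :
    ∃ g : U → Quotient (zeroInfoSetoid c),
      ∀ ω : Ω, 0 < p ω → g (fU ω) = Quotient.mk (zeroInfoSetoid c) (fW ω) :=
  zero_info_function_of_U_general p hp fW fU fZ hWUZ hUWZ c hc
end

section
/- Let X, Y, V, Ŷ be finitely-valued random variables where V is a deterministic function of Y, Ŷ − V − (X, Y) is a Markov chain with Q_{Ŷ|V} = Q_{Y|V}, and let Dec be a function of Y with P(Dec(Y) ≠ M) ≤ ε where M determines X (X = Enc(M)) and H(M) = log|ℳ|. Then H(Dec(Ŷ)|Y) = H(Dec(Y)|V) ≥ I(Dec(Y); X | V) ≥ I(X;Y|V) − I(X;Y|V,Dec(Y)). -/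
open Finset

set_option linter.unusedSectionVars false
section aux
open Classical
variable {Ω α β γ : Type*} [Fintype Ω] [Fintype α] [Fintype β] [Fintype γ]

lemma push_push (p : Ω → ℝ) (g : Ω → α) (e : α → β) :
    push (push p g) e = push p (fun ω => e (g ω)) := by
  classical
  funext b
  simp only [push]
  have h1 : ∀ a : α, (if e a = b then (∑ ω, if g ω = a then p ω else 0) else 0)
      = ∑ ω, if g ω = a then (if e a = b then p ω else 0) else 0 := by
    intro a
    split
    · rfl
    · simp
  rw [Finset.sum_congr rfl (fun a _ => h1 a), Finset.sum_comm]
  refine Finset.sum_congr rfl (fun ω _ => ?_)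
  rw [Finset.sum_eq_single (g ω)]
  · simp
  · intro a _ ha; exact if_neg (fun h => ha h.symm)
  · simp

lemma push_nonneg (p : Ω → ℝ) (hp : ∀ ω, 0 ≤ p ω) (g : Ω → α) (a : α) :
    0 ≤ push p g a := by
  classical
  refine Finset.sum_nonneg fun ω _ => ?_
  split
  · exact hp ω
  · exact le_refl 0

lemma push_marg (p : Ω → ℝ) (g : Ω → α) (e : α → β) (b : β) :
    push p (fun ω => e (g ω)) b = ∑ a, if e a = b then push p g a else 0 := by
  rw [← push_push]; rfl

lemma H_congr (p : Ω → ℝ) {g g' : Ω → α} (h : push p g = push p g') :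
    H p g = H p g' := by simp [H, h]

lemma H_comp_inj (p : Ω → ℝ) (g : Ω → α) (e : α → β) (he : Function.Injective e) :
    H p (fun ω => e (g ω)) = H p g := by
  classical
  simp only [H, ent, ← push_push]
  congr 1
  rw [← Finset.sum_subset (Finset.subset_univ ((Finset.univ : Finset α).image e))]
  · rw [Finset.sum_image (fun a _ a' _ h => he h)]
    refine Finset.sum_congr rfl fun a _ => ?_
    have h2 : push (push p g) e (e a) = push p g a := by
      simp only [push]
      rw [Finset.sum_eq_single a]
      · simp
      · intro a' _ ha'; exact if_neg (fun h => ha' (he h))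
      · simp
    rw [h2]
  · intro b _ hb
    have h3 : push (push p g) e b = 0 := by
      refine Finset.sum_eq_zero fun a _ => ?_
      refine if_neg (fun h => hb ?_)
      exact h ▸ Finset.mem_image_of_mem e (Finset.mem_univ a)
    simp [h3]

lemma push_snd (p : Ω → ℝ) (g : Ω → α) (h : Ω → β) (b : β) :
    push p h b = ∑ a, push p (fun ω => (g ω, h ω)) (a, b) := by
  classical
  have h1 : push p h b = push p (fun ω => Prod.snd ((fun ω => (g ω, h ω)) ω)) b := rfl
  rw [h1, push_marg p (fun ω => (g ω, h ω)) Prod.snd b]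
  rw [Fintype.sum_prod_type]
  refine Finset.sum_congr rfl fun a _ => ?_
  rw [Finset.sum_eq_single b]
  · simp
  · intro b' _ hb'; exact if_neg hb'
  · simp

lemma H_snd_le (p : Ω → ℝ) (hp : ∀ ω, 0 ≤ p ω) (g : Ω → α) (h : Ω → β) :
    H p h ≤ H p (fun ω => (g ω, h ω)) := by
  classical
  set q : α × β → ℝ := push p (fun ω => (g ω, h ω)) with hq
  have hq0 : ∀ t, 0 ≤ q t := fun t => push_nonneg p hp _ t
  have hmarg : ∀ b, push p h b = ∑ a, q (a, b) := fun b => push_snd p g h b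
  have hle : ∀ a b, q (a, b) ≤ push p h b := by
    intro a b
    rw [hmarg b]
    exact Finset.single_le_sum (f := fun a => q (a, b)) (fun a _ => hq0 _) (Finset.mem_univ a)
  simp only [H, ent, neg_le_neg_iff]
  calc ∑ t : α × β, q t * Real.logb 2 (q t)
      ≤ ∑ t : α × β, q t * Real.logb 2 (push p h t.2) := by
        refine Finset.sum_le_sum fun t _ => ?_
        rcases eq_or_lt_of_le (hq0 t) with h0 | h0
        · simp [← h0]
        · refine mul_le_mul_of_nonneg_left ?_ (le_of_lt h0)
          exact Real.logb_le_logb_of_le (by norm_num) h0 (hle t.1 t.2)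
    _ = ∑ b, push p h b * Real.logb 2 (push p h b) := by
        rw [Fintype.sum_prod_type_right]
        refine Finset.sum_congr rfl fun b _ => ?_
        have h4 : (∑ a : α, q (a, b) * Real.logb 2 (push p h b))
            = push p h b * Real.logb 2 (push p h b) := by
          rw [← Finset.sum_mul, ← hmarg b]
        exact h4

lemma push_apply_inj (q : α → ℝ) (e : α → β) (he : Function.Injective e) (a : α) :
    push q e (e a) = q a := by
  classical
  simp only [push]
  rw [Finset.sum_eq_single a]
  · simp
  · intro a' _ ha'; exact if_neg (fun h => ha' (he h))
  · simp

lemma push_pair_fst (p : Ω → ℝ) (g : Ω → α) (h : Ω → β) (a : α) :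
    push p g a = ∑ b, push p (fun ω => (g ω, h ω)) (a, b) := by
  classical
  have h1 : push p g a = push p (fun ω => Prod.fst ((fun ω => (g ω, h ω)) ω)) a := rfl
  rw [h1, push_marg p (fun ω => (g ω, h ω)) Prod.fst a]
  rw [Fintype.sum_prod_type]
  rw [Finset.sum_eq_single a]
  · refine Finset.sum_congr rfl fun b _ => ?_; simp
  · intro x _ hx
    refine Finset.sum_eq_zero fun b _ => if_neg ?_
    exact fun h2 => hx h2
  · simp

lemma markov_entropy (p : Ω → ℝ) (hp : ∀ ω, 0 ≤ p ω)
    (A : Ω → α) (B : Ω → β) (C : Ω → γ) (hm : Markov p A B C) :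
    H p (fun ω => (A ω, B ω, C ω)) =
      H p (fun ω => (A ω, B ω)) + H p (fun ω => (B ω, C ω)) - H p B := by
  classical
  set w := push p (fun ω => (A ω, B ω, C ω)) with hw
  set q2 := push p (fun ω => (A ω, B ω)) with hq2
  set q23 := push p (fun ω => (B ω, C ω)) with hq23
  set pB := push p B with hpB
  have hw0 : ∀ t, 0 ≤ w t := fun t => push_nonneg p hp _ t
  have m23 : ∀ b c, q23 (b, c) = ∑ a, w (a, b, c) := fun b c => push_snd p A _ (b, c)
  have m2 : ∀ a b, q2 (a, b) = ∑ c, w (a, b, c) := by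
    intro a b
    have e1 : q2 (a, b) = ∑ c, push p (fun ω => ((A ω, B ω), C ω)) ((a, b), c) :=
      push_pair_fst p (fun ω => (A ω, B ω)) C (a, b)
    rw [e1]
    refine Finset.sum_congr rfl fun c _ => ?_
    have e2 : push p (fun ω => ((A ω, B ω), C ω)) ((a, b), c)
        = push (push p (fun ω => (A ω, B ω, C ω)))
            (fun t : α × β × γ => ((t.1, t.2.1), t.2.2)) ((a, b), c) := by
      rw [push_push]
    rw [e2]
    exact push_apply_inj _ _
      (fun t t' h2 => by
        obtain ⟨x, y, z⟩ := t; obtain ⟨x', y', z'⟩ := t'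
        simpa [Prod.ext_iff, and_assoc] using h2) (a, (b, c))
  have mB : ∀ b, pB b = ∑ a, ∑ c, w (a, b, c) := by
    intro b
    rw [show pB b = ∑ a, q2 (a, b) from push_snd p A B b]
    exact Finset.sum_congr rfl fun a _ => m2 a b
  have key : ∀ t : α × β × γ, w t * Real.logb 2 (w t) =
      w t * (Real.logb 2 (q2 (t.1, t.2.1)) + Real.logb 2 (q23 (t.2.1, t.2.2))
        - Real.logb 2 (pB t.2.1)) := by
    rintro ⟨a, b, c⟩
    rcases eq_or_lt_of_le (hw0 (a, b, c)) with h0 | h0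
    · rw [← h0, zero_mul, zero_mul]
    · have hq2pos : 0 < q2 (a, b) := by
        refine lt_of_lt_of_le h0 ?_
        rw [m2 a b]
        exact Finset.single_le_sum (f := fun c => w (a, b, c)) (fun c _ => hw0 _)
          (Finset.mem_univ c)
      have hq23pos : 0 < q23 (b, c) := by
        refine lt_of_lt_of_le h0 ?_
        rw [m23 b c]
        exact Finset.single_le_sum (f := fun a => w (a, b, c)) (fun a _ => hw0 _)
          (Finset.mem_univ a)
      have hpBpos : 0 < pB b := by
        refine lt_of_lt_of_le h0 ?_
        rw [mB b]
        calc w (a, b, c) ≤ ∑ c, w (a, b, c) :=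
              Finset.single_le_sum (f := fun c => w (a, b, c)) (fun c _ => hw0 _)
                (Finset.mem_univ c)
          _ ≤ ∑ a, ∑ c, w (a, b, c) :=
              Finset.single_le_sum (f := fun a => ∑ c, w (a, b, c))
                (fun a _ => Finset.sum_nonneg fun c _ => hw0 _) (Finset.mem_univ a)
      have heq : w (a, b, c) = q2 (a, b) * q23 (b, c) / pB b := by
        rw [eq_div_iff hpBpos.ne']
        exact hm a b c
      rw [heq, Real.logb_div (mul_pos hq2pos hq23pos).ne' hpBpos.ne',
        Real.logb_mul hq2pos.ne' hq23pos.ne']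
  have s1 : ∑ t : α × β × γ, w t * Real.logb 2 (q2 (t.1, t.2.1))
      = ∑ s : α × β, q2 s * Real.logb 2 (q2 s) := by
    rw [Fintype.sum_prod_type, Fintype.sum_prod_type]
    refine Finset.sum_congr rfl fun a _ => ?_
    have h5 : ∀ b : β, (∑ c, w (a, b, c) * Real.logb 2 (q2 (a, b)))
        = q2 (a, b) * Real.logb 2 (q2 (a, b)) := by
      intro b
      rw [← Finset.sum_mul, ← m2 a b]
    rw [Fintype.sum_prod_type]
    exact Finset.sum_congr rfl fun b _ => h5 b
  have s2 : ∑ t : α × β × γ, w t * Real.logb 2 (q23 (t.2.1, t.2.2))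
      = ∑ s : β × γ, q23 s * Real.logb 2 (q23 s) := by
    rw [Fintype.sum_prod_type, Finset.sum_comm]
    refine Finset.sum_congr rfl fun u _ => ?_
    have h5 : (∑ a, w (a, u.1, u.2) * Real.logb 2 (q23 (u.1, u.2)))
        = q23 (u.1, u.2) * Real.logb 2 (q23 (u.1, u.2)) := by
      rw [← Finset.sum_mul, ← m23 u.1 u.2]
    exact h5
  have s3 : ∑ t : α × β × γ, w t * Real.logb 2 (pB t.2.1)
      = ∑ b, pB b * Real.logb 2 (pB b) := by
    rw [Fintype.sum_prod_type]
    have h5 : ∀ a : α, (∑ u : β × γ, w (a, u) * Real.logb 2 (pB u.1))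
        = ∑ b, (∑ c, w (a, b, c)) * Real.logb 2 (pB b) := by
      intro a
      rw [Fintype.sum_prod_type]
      refine Finset.sum_congr rfl fun b _ => ?_
      have h6 : (∑ y : γ, w (a, b, y) * Real.logb 2 (pB b))
          = (∑ c, w (a, b, c)) * Real.logb 2 (pB b) := by
        rw [← Finset.sum_mul]
      exact h6
    rw [Finset.sum_congr rfl fun a _ => h5 a, Finset.sum_comm]
    refine Finset.sum_congr rfl fun b _ => ?_
    rw [← Finset.sum_mul, ← mB b]
  have hsum : ∑ t : α × β × γ, w t * Real.logb 2 (w t)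
      = (∑ s : α × β, q2 s * Real.logb 2 (q2 s))
        + (∑ s : β × γ, q23 s * Real.logb 2 (q23 s))
        - (∑ b, pB b * Real.logb 2 (pB b)) := by
    rw [Finset.sum_congr rfl fun t _ => key t]
    rw [← s1, ← s2, ← s3]
    rw [← Finset.sum_add_distrib, ← Finset.sum_sub_distrib]
    refine Finset.sum_congr rfl fun t _ => ?_
    ring
  show ent w = ent q2 + ent q23 - ent pB
  simp only [ent]
  rw [hsum]
  ring

lemma my_ite_congr {P Q : Prop} {hP : Decidable P} {hQ : Decidable Q} (h : P ↔ Q) (x y : ℝ) :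
    (@ite ℝ P hP x y) = (@ite ℝ Q hQ x y) := by
  have hpq : P = Q := propext h
  subst hpq
  rw [Subsingleton.elim hP hQ]

lemma markov_comp {α' γ' : Type*} [Fintype α'] [Fintype γ'] (p : Ω → ℝ) {A : Ω → α} {B : Ω → β} {C : Ω → γ}
    (e : α → α') (e' : γ → γ') (hm : Markov p A B C) :
    Markov p (fun ω => e (A ω)) B (fun ω => e' (C ω)) := by
  classical
  intro a b c
  set w := push p (fun ω => (A ω, B ω, C ω)) with hw
  set q2 := push p (fun ω => (A ω, B ω)) with hq2
  set q23 := push p (fun ω => (B ω, C ω)) with hq23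
  have h1 : push p (fun ω => (e (A ω), B ω, e' (C ω))) (a, b, c)
      = ∑ x, ∑ z, if e x = a ∧ e' z = c then w (x, b, z) else 0 := by
    refine Eq.trans (push_marg p (fun ω => (A ω, B ω, C ω))
      (fun t => (e t.1, t.2.1, e' t.2.2)) (a, b, c)) ?_
    rw [Fintype.sum_prod_type]
    refine Finset.sum_congr rfl fun x _ => ?_
    rw [Fintype.sum_prod_type, Finset.sum_eq_single b]
    · refine Finset.sum_congr rfl fun z _ => ?_
      exact my_ite_congr (by simp) _ _
    · intro y _ hy
      refine Finset.sum_eq_zero fun z _ => if_neg fun h2 => ?_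
      exact hy (congrArg (fun t : α' × β × γ' => t.2.1) h2)
    · simp
  have h2 : push p (fun ω => (e (A ω), B ω)) (a, b)
      = ∑ x, if e x = a then q2 (x, b) else 0 := by
    refine Eq.trans (push_marg p (fun ω => (A ω, B ω)) (fun t => (e t.1, t.2)) (a, b)) ?_
    rw [Fintype.sum_prod_type]
    refine Finset.sum_congr rfl fun x _ => ?_
    rw [Finset.sum_eq_single b]
    · exact my_ite_congr (by simp) _ _
    · intro y _ hy
      exact if_neg fun h3 => hy (congrArg (fun t : α' × β => t.2) h3)
    · simp
  have h3 : push p (fun ω => (B ω, e' (C ω))) (b, c)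
      = ∑ z, if e' z = c then q23 (b, z) else 0 := by
    refine Eq.trans (push_marg p (fun ω => (B ω, C ω)) (fun t => (t.1, e' t.2)) (b, c)) ?_
    rw [Fintype.sum_prod_type, Finset.sum_eq_single b]
    · refine Finset.sum_congr rfl fun z _ => ?_
      exact my_ite_congr (by simp) _ _
    · intro y _ hy
      refine Finset.sum_eq_zero fun z _ => if_neg fun h4 => ?_
      exact hy (congrArg (fun t : β × γ' => t.1) h4)
    · simp
  rw [h1, h2, h3, Finset.sum_mul_sum, Finset.sum_mul]
  refine Finset.sum_congr rfl fun x _ => ?_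
  rw [Finset.sum_mul]
  refine Finset.sum_congr rfl fun z _ => ?_
  by_cases h : e x = a ∧ e' z = c
  · rw [if_pos h, if_pos h.1, if_pos h.2]
    exact hm x b z
  · rw [if_neg h, zero_mul]
    by_cases h1' : e x = a
    · rw [if_neg fun hz => h ⟨h1', hz⟩, mul_zero]
    · rw [if_neg h1', zero_mul]

end aux


open Classical in
/-- rate-of-deniability analysis in the proof of Theorem 3: with
`V = f(Y)`, a faking variable `Ŷ` satisfying the Markov chain `Ŷ − V − (X,Y)` and
`Q_{Ŷ|V} = Q_{Y|V}`, a decoder with error probability `P(Dec(Y) ≠ M) ≤ ε`, `X = Enc(M)`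
and `M` uniform (`H(M) = log|ℳ|`), the chain
`H(Dec(Ŷ)|Y) = H(Dec(Y)|V) ≥ I(Dec(Y);X|V) ≥ I(X;Y|V) − I(X;Y|V,Dec(Y))` holds. -/
theorem deniability_chain {Ω Mt X Y V : Type*}
    [Fintype Ω] [Fintype Mt] [Fintype X] [Fintype Y] [Fintype V] [Nonempty Mt]
    (p : Ω → ℝ) (hp : IsProb p)
    (fMv : Ω → Mt) (fY fYhat : Ω → Y)
    (Enc : Mt → X) (Dec : Y → Mt) (f : Y → V)
    (hunif : H p fMv = Real.logb 2 (Fintype.card Mt))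
    (ε : ℝ)
    (herr : (∑ ω, if Dec (fY ω) ≠ fMv ω then p ω else 0) ≤ ε)
    (hmarkov : Markov p fYhat (fun ω => f (fY ω))
      (fun ω => (Enc (fMv ω), fY ω)))
    (hcond : ∀ yh v, push p (fun ω => (fYhat ω, f (fY ω))) (yh, v) =
                     push p (fun ω => (fY ω, f (fY ω))) (yh, v)) :
    condH p (fun ω => Dec (fYhat ω)) fY = condH p (fun ω => Dec (fY ω)) (fun ω => f (fY ω)) ∧
    condH p (fun ω => Dec (fY ω)) (fun ω => f (fY ω)) ≥
      cmi p (fun ω => Dec (fY ω)) (fun ω => Enc (fMv ω)) (fun ω => f (fY ω)) ∧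
    cmi p (fun ω => Dec (fY ω)) (fun ω => Enc (fMv ω)) (fun ω => f (fY ω)) ≥
      cmi p (fun ω => Enc (fMv ω)) fY (fun ω => f (fY ω)) -
      cmi p (fun ω => Enc (fMv ω)) fY (fun ω => (f (fY ω), Dec (fY ω))) := by
  classical
  have hp0 := hp.1
  refine ⟨?_, ?_, ?_⟩
  · -- Part 1
    have hY : H p (fun ω => (f (fY ω), fY ω)) = H p fY :=
      H_comp_inj p fY (fun y => (f y, y)) (fun y y' h => congrArg Prod.snd h)
    have hAY : H p (fun ω => (Dec (fYhat ω), (f (fY ω), fY ω)))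
        = H p (fun ω => (Dec (fYhat ω), fY ω)) :=
      H_comp_inj p (fun ω => (Dec (fYhat ω), fY ω)) (fun t => (t.1, (f t.2, t.2)))
        (fun t t' h => by
          obtain ⟨d, y⟩ := t; obtain ⟨d', y'⟩ := t'
          simp only [Prod.ext_iff] at h ⊢
          exact ⟨h.1, h.2.2⟩)
    have hmark : Markov p (fun ω => Dec (fYhat ω)) (fun ω => f (fY ω)) fY :=
      markov_comp p Dec (Prod.snd : X × Y → Y) hmarkov
    have hent : H p (fun ω => (Dec (fYhat ω), f (fY ω), fY ω))
        = H p (fun ω => (Dec (fYhat ω), f (fY ω)))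
          + H p (fun ω => (f (fY ω), fY ω)) - H p (fun ω => f (fY ω)) :=
      markov_entropy p hp0 (fun ω => Dec (fYhat ω)) (fun ω => f (fY ω)) fY hmark
    have hpe : push p (fun ω => (fYhat ω, f (fY ω))) = push p (fun ω => (fY ω, f (fY ω))) := by
      funext t
      obtain ⟨yh, v⟩ := t
      exact hcond yh v
    have hpushAV : push p (fun ω => (Dec (fYhat ω), f (fY ω)))
        = push p (fun ω => (Dec (fY ω), f (fY ω))) :=
      calc push p (fun ω => (Dec (fYhat ω), f (fY ω)))
          = push (push p (fun ω => (fYhat ω, f (fY ω)))) (fun t => (Dec t.1, t.2)) :=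
            (push_push p (fun ω => (fYhat ω, f (fY ω))) (fun t => (Dec t.1, t.2))).symm
        _ = push (push p (fun ω => (fY ω, f (fY ω)))) (fun t => (Dec t.1, t.2)) := by rw [hpe]
        _ = push p (fun ω => (Dec (fY ω), f (fY ω))) :=
            push_push p (fun ω => (fY ω, f (fY ω))) (fun t => (Dec t.1, t.2))
    have hHAV : H p (fun ω => (Dec (fYhat ω), f (fY ω)))
        = H p (fun ω => (Dec (fY ω), f (fY ω))) := H_congr p hpushAV
    simp only [condH]
    linarith [hent, hAY, hY, hHAV]
  · -- Part 2
    have hre : H p (fun ω => ((Dec (fY ω), Enc (fMv ω)), f (fY ω)))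
        = H p (fun ω => (Dec (fY ω), (Enc (fMv ω), f (fY ω)))) :=
      (H_comp_inj p (fun ω => (Dec (fY ω), (Enc (fMv ω), f (fY ω))))
        (fun t => ((t.1, t.2.1), t.2.2))
        (fun t t' h => by
          obtain ⟨d, x, v⟩ := t; obtain ⟨d', x', v'⟩ := t'
          simp only [Prod.ext_iff] at h ⊢
          exact ⟨h.1.1, h.1.2, h.2⟩))
    have hge : H p (fun ω => (Enc (fMv ω), f (fY ω)))
        ≤ H p (fun ω => (Dec (fY ω), (Enc (fMv ω), f (fY ω)))) :=
      H_snd_le p hp0 (fun ω => Dec (fY ω)) (fun ω => (Enc (fMv ω), f (fY ω)))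
    simp only [ge_iff_le, cmi, condH]
    linarith [hre, hge]
  · -- Part 3
    have i1 : H p (fun ω => (fY ω, f (fY ω))) = H p fY :=
      H_comp_inj p fY (fun y => (y, f y)) (fun y y' h => congrArg Prod.fst h)
    have i2 : H p (fun ω => ((Enc (fMv ω), fY ω), f (fY ω)))
        = H p (fun ω => (Enc (fMv ω), fY ω)) :=
      H_comp_inj p (fun ω => (Enc (fMv ω), fY ω)) (fun t => ((t.1, t.2), f t.2))
        (fun t t' h => congrArg Prod.fst h)
    have i3 : H p (fun ω => (fY ω, (f (fY ω), Dec (fY ω)))) = H p fY :=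
      H_comp_inj p fY (fun y => (y, (f y, Dec y))) (fun y y' h => congrArg Prod.fst h)
    have i4 : H p (fun ω => ((Enc (fMv ω), fY ω), (f (fY ω), Dec (fY ω))))
        = H p (fun ω => (Enc (fMv ω), fY ω)) :=
      H_comp_inj p (fun ω => (Enc (fMv ω), fY ω))
        (fun t => ((t.1, t.2), (f t.2, Dec t.2))) (fun t t' h => congrArg Prod.fst h)
    have i5 : H p (fun ω => ((Dec (fY ω), Enc (fMv ω)), f (fY ω)))
        = H p (fun ω => (Enc (fMv ω), (f (fY ω), Dec (fY ω)))) :=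
      (H_comp_inj p (fun ω => (Enc (fMv ω), (f (fY ω), Dec (fY ω))))
        (fun t => ((t.2.2, t.1), t.2.1))
        (fun t t' h => by
          obtain ⟨x, v, d⟩ := t; obtain ⟨x', v', d'⟩ := t'
          simp only [Prod.ext_iff] at h ⊢
          exact ⟨h.1.2, h.2, h.1.1⟩))
    have i6 : H p (fun ω => (Dec (fY ω), f (fY ω)))
        = H p (fun ω => (f (fY ω), Dec (fY ω))) :=
      H_comp_inj p (fun ω => (f (fY ω), Dec (fY ω))) Prod.swap Prod.swap_injective
    simp only [ge_iff_le, cmi, condH]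
    linarith [i1, i2, i3, i4, i5, i6]
end
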